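/- arXiv:1209.1767 — 2 statements merged into one kernel-verified Lean document; each statement's English description precedes it below -/
import Mathlib

section
/- Let X, Y be Hilbert spaces, A, E ∈ B(X,Y), Ā = A + E, and T, T' ⊆ X, S, S' ⊆ Y closed subspaces such that G = A_{T,S}^{(2)} exists, max{δ̂(T,T'), δ̂(S,S')} < 1/(1 + ‖A‖·‖G‖)², and ‖G‖·‖E‖ < 1/(1 + ‖G‖·‖A‖). Then ‖Ā_{T',S'}^{(2)} − G‖ ≤ ‖G‖²·(‖E‖ + ((1+√5)/2)·‖A‖·(δ̂(T,T') + δ̂(S,S'))) / (1 − ‖G‖·(‖E‖ + ‖A‖·(δ̂(T,T') + δ̂(S,S')))). -/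
/-!
Write `δ_T = δ̂(T,T')`, `δ_S = δ̂(S,S')` and `c = ‖A‖‖G‖ ≥ 1`. The outer inverse is moved in three
Neumann-series steps `G ↦ G (1 - t)⁻¹` or `G ↦ (1 - t)⁻¹ G` with `‖t‖ ≤ ‖G‖ x`, each of which
lowers `‖G‖⁻¹` by at most `x`: the kernel goes from `S` to `S'` with `t = (1 - P_{S'})(1 - AG)`,
the range from `T` to `T'` with `t = (1 - GA) P_{T'}`, and `A` is replaced by `A + E` with
`t = -EG`. Kato's inequality `‖1 - Q‖ ≤ ‖Q‖` for idempotents gives `x = δ_S ‖A‖` and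
`x = δ_T ‖A‖` in the first two steps, so `‖Ḡ‖⁻¹ ≥ ‖G‖⁻¹ - ‖E‖ - ‖A‖(δ_T + δ_S)`.

For the difference, split `Ḡy - Gy` orthogonally along `T`. Its `Tᗮ`-part is that of `Ḡy ∈ T'`, of
size at most `δ_T ‖Ḡy‖`; its `T`-part is `GA(P_T Ḡy - Ḡy) - GEḠy - G(y - (A+E)Ḡy)`, of size at most
`(δ_T c + ‖G‖‖E‖ + δ_S (c + ‖G‖‖E‖)) ‖Ḡy‖`. Pythagoras and `φ² - 1 = φ` merge the two bounds into
the factor `‖G‖‖E‖ + φ c (δ_T + δ_S)`.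
-/

noncomputable section

open ContinuousLinearMap

/-- δ(M,N) = sup{dist(x,N) : x ∈ M, ‖x‖ = 1}, with sSup ∅ = 0 covering M = {0}. -/
def gapDelta {H : Type*} [NormedAddCommGroup H] (M N : Set H) : ℝ :=
  sSup ((fun x => Metric.infDist x N) '' {x | x ∈ M ∧ ‖x‖ = 1})

/-- The gap δ̂(M,N) = max{δ(M,N), δ(N,M)}. -/
def gapHat {H : Type*} [NormedAddCommGroup H] (M N : Set H) : ℝ :=
  max (gapDelta M N) (gapDelta N M)

/-- Orthogonal projection onto a closed subspace, as an operator H →L[ℂ] H. -/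
def projCLM {H : Type*} [NormedAddCommGroup H] [InnerProductSpace ℂ H] [CompleteSpace H]
    (K : Submodule ℂ H) (hK : IsClosed (K : Set H)) : H →L[ℂ] H :=
  haveI := hK.completeSpace_coe
  K.subtypeL.comp K.orthogonalProjectionOnto

/-- G is the outer inverse A_{T,S}^{(2)}: GAG = G, R(G) = T, N(G) = S. -/
def IsOuterInv {X Y : Type*} [NormedAddCommGroup X] [NormedSpace ℂ X]
    [NormedAddCommGroup Y] [NormedSpace ℂ Y]
    (A : X →L[ℂ] Y) (T : Submodule ℂ X) (S : Submodule ℂ Y) (G : Y →L[ℂ] X) : Prop :=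
  G ∘L (A ∘L G) = G ∧ LinearMap.range (G : Y →ₗ[ℂ] X) = T ∧ LinearMap.ker (G : Y →ₗ[ℂ] X) = S

/-- B is the Moore–Penrose inverse of A. -/
def IsMPInv {X Y : Type*} [NormedAddCommGroup X] [InnerProductSpace ℂ X] [CompleteSpace X]
    [NormedAddCommGroup Y] [InnerProductSpace ℂ Y] [CompleteSpace Y]
    (A : X →L[ℂ] Y) (B : Y →L[ℂ] X) : Prop :=
  A ∘L (B ∘L A) = A ∧ B ∘L (A ∘L B) = B ∧
  adjoint (A ∘L B) = A ∘L B ∧ adjoint (B ∘L A) = B ∘L A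

theorem IsIdempotentElem.one_le_norm {R : Type*} [NormedRing R] {p : R} (hp : IsIdempotentElem p)
    (h0 : p ≠ 0) : 1 ≤ ‖p‖ := by
  have hpos : 0 < ‖p‖ := norm_pos_iff.mpr h0
  have h : ‖p‖ * 1 ≤ ‖p‖ * ‖p‖ := by simpa only [mul_one, hp.eq] using norm_mul_le p p
  exact le_of_mul_le_mul_left h hpos

theorem ne_zero_of_lt_inv_norm {E : Type*} [NormedAddCommGroup E] {G : E} {x : ℝ} (hx : 0 ≤ x)
    (h : x < ‖G‖⁻¹) : G ≠ 0 := by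
  rintro rfl
  simp only [norm_zero, inv_zero] at h
  linarith

section InnerProductSpace

variable {𝕜 H : Type*} [RCLike 𝕜] [NormedAddCommGroup H] [InnerProductSpace 𝕜 H]

theorem exists_norm_mul_norm_add_smul_le (m n : H) :
    ∃ μ : 𝕜, ‖n‖ * ‖m + μ • n‖ ≤ ‖m‖ * ‖m + n‖ := by
  rcases eq_or_ne n 0 with rfl | hn
  · exact ⟨0, by simp only [norm_zero, zero_mul]; positivity⟩
  -- `m = λ • n + r` with `r ⟂ n`; then both `m` and `m + n` are orthogonal sums
  set lam : 𝕜 := inner 𝕜 n m / (‖n‖ : 𝕜) ^ 2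
  set r := m - lam • n
  have hnr : inner 𝕜 n r = 0 := by
    have hn2 : (‖n‖ : 𝕜) ^ 2 ≠ 0 := by simpa using hn
    rw [inner_sub_right, inner_smul_right, inner_self_eq_norm_sq_to_K, div_mul_cancel₀ _ hn2,
      sub_self]
  have pythag : ∀ κ : 𝕜, ‖κ • n + r‖ ^ 2 = ‖κ‖ ^ 2 * ‖n‖ ^ 2 + ‖r‖ ^ 2 := fun κ => by
    have := norm_add_sq_eq_norm_sq_add_norm_sq_of_inner_eq_zero (κ • n) r
      (by rw [inner_smul_left, hnr, mul_zero])
    rw [norm_smul] at this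
    nlinarith [this]
  have hm : m = lam • n + r := by simp [r]
  have hmn : m + n = (1 + lam) • n + r := by rw [hm, add_smul, one_smul]; abel
  have htri : 1 ≤ ‖lam‖ + ‖1 + lam‖ := by
    simpa using norm_sub_le (1 + lam) lam |>.trans_eq (add_comm _ _)
  have hr : m + -lam • n = r := by simp only [r, neg_smul, sub_eq_add_neg]
  refine ⟨-lam, ?_⟩
  rw [hr]
  refine (pow_le_pow_iff_left₀ (by positivity) (by positivity) two_ne_zero).mp ?_
  rw [mul_pow, mul_pow, hmn, pythag, hm, pythag]
  have hsq : 1 ≤ (‖lam‖ + ‖1 + lam‖) ^ 2 := by nlinarith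
  nlinarith [sq_nonneg (‖lam‖ * ‖1 + lam‖ * ‖n‖ ^ 2 - ‖r‖ ^ 2),
    mul_nonneg (sub_nonneg.mpr hsq) (mul_nonneg (sq_nonneg ‖n‖) (sq_nonneg ‖r‖))]

-- Kato's inequality `‖1 - Q‖ ≤ ‖Q‖` for idempotents
theorem IsIdempotentElem.norm_sub_apply_le {Q : H →L[𝕜] H} (hQ : IsIdempotentElem Q)
    (hQ0 : Q ≠ 0) (y : H) : ‖y - Q y‖ ≤ ‖Q‖ * ‖y‖ := by
  set m := Q y
  set n := y - Q y
  have hQm : Q m = m := congr($(hQ.eq) y)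
  have hQn : Q n = 0 := (map_sub Q y m).trans (by rw [hQm, sub_self])
  rcases eq_or_ne m 0 with hm | hm
  · rw [show n = y from (congrArg (y - ·) hm).trans (sub_zero y)]
    exact le_mul_of_one_le_left (norm_nonneg y) (hQ.one_le_norm hQ0)
  obtain ⟨μ, hμ⟩ := exists_norm_mul_norm_add_smul_le (𝕜 := 𝕜) m n
  have hQμ : ‖m‖ ≤ ‖Q‖ * ‖m + μ • n‖ := by
    simpa only [map_add, map_smul, hQm, hQn, smul_zero, add_zero] using Q.le_opNorm (m + μ • n)
  have hy : m + n = y := add_sub_cancel _ _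
  have key : ‖n‖ * ‖m‖ ≤ ‖Q‖ * ‖y‖ * ‖m‖ :=
    calc ‖n‖ * ‖m‖ ≤ ‖n‖ * (‖Q‖ * ‖m + μ • n‖) := by gcongr
      _ = ‖Q‖ * (‖n‖ * ‖m + μ • n‖) := by ring
      _ ≤ ‖Q‖ * (‖m‖ * ‖y‖) := by rw [← hy]; gcongr
      _ = ‖Q‖ * ‖y‖ * ‖m‖ := by ring
  exact le_of_mul_le_mul_right key (norm_pos_iff.mpr hm)

end InnerProductSpace

section Neumann

variable {𝕜 E F : Type*} [NontriviallyNormedField 𝕜] [NormedAddCommGroup E] [NormedSpace 𝕜 E]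
  [NormedAddCommGroup F] [NormedSpace 𝕜 F]

theorem norm_oneSub_inv_le [CompleteSpace E] (t : E →L[𝕜] E) (ht : ‖t‖ < 1) :
    ‖(↑(Units.oneSub t ht)⁻¹ : E →L[𝕜] E)‖ ≤ (1 - ‖t‖)⁻¹ := by
  have h1 : ‖(1 : E →L[𝕜] E)‖ ≤ 1 := norm_id_le
  exact (tsum_geometric_le_of_norm_lt_one t ht).trans (by linarith)

theorem inv_sub_le_inv_of_le_mul_inv {g b s x : ℝ} (hg : 0 < g) (hb : 0 < b)
    (hsx : s ≤ g * x) (h : b ≤ g * (1 - s)⁻¹) : g⁻¹ - x ≤ b⁻¹ :=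
  calc g⁻¹ - x ≤ (1 - s) / g := by
        rw [le_div_iff₀ hg, sub_mul, inv_mul_cancel₀ hg.ne']
        linarith
    _ = (g * (1 - s)⁻¹)⁻¹ := by rw [mul_inv, inv_inv, div_eq_inv_mul]
    _ ≤ b⁻¹ := inv_anti₀ hb h

theorem inv_norm_sub_le_inv_norm_comp_oneSub_inv [CompleteSpace F] {G : F →L[𝕜] E} (hG : G ≠ 0)
    {t : F →L[𝕜] F} (ht : ‖t‖ < 1) {x : ℝ} (htx : ‖t‖ ≤ ‖G‖ * x) :
    ‖G‖⁻¹ - x ≤ ‖G ∘L (↑(Units.oneSub t ht)⁻¹ : F →L[𝕜] F)‖⁻¹ := by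
  set u := Units.oneSub t ht
  have hne : G ∘L (↑u⁻¹ : F →L[𝕜] F) ≠ 0 := fun h0 => hG <| by
    ext y
    have hy : (↑u⁻¹ : F →L[𝕜] F) ((u : F →L[𝕜] F) y) = y := congr($(u.inv_mul) y)
    rw [zero_apply, ← hy, ← comp_apply, h0, zero_apply]
  refine inv_sub_le_inv_of_le_mul_inv (norm_pos_iff.mpr hG) (norm_pos_iff.mpr hne) htx ?_
  calc ‖G ∘L (↑u⁻¹ : F →L[𝕜] F)‖ ≤ ‖G‖ * ‖(↑u⁻¹ : F →L[𝕜] F)‖ := opNorm_comp_le _ _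
    _ ≤ ‖G‖ * (1 - ‖t‖)⁻¹ := by gcongr; exact norm_oneSub_inv_le t ht

theorem inv_norm_sub_le_inv_norm_oneSub_inv_comp [CompleteSpace E] {G : F →L[𝕜] E} (hG : G ≠ 0)
    {t : E →L[𝕜] E} (ht : ‖t‖ < 1) {x : ℝ} (htx : ‖t‖ ≤ ‖G‖ * x) :
    ‖G‖⁻¹ - x ≤ ‖(↑(Units.oneSub t ht)⁻¹ : E →L[𝕜] E) ∘L G‖⁻¹ := by
  set u := Units.oneSub t ht
  have hne : (↑u⁻¹ : E →L[𝕜] E) ∘L G ≠ 0 := fun h0 => hG <| by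
    ext y
    have hy : (u : E →L[𝕜] E) ((↑u⁻¹ : E →L[𝕜] E) (G y)) = G y := congr($(u.mul_inv) (G y))
    rw [zero_apply, ← hy, ← comp_apply (↑u⁻¹ : E →L[𝕜] E), h0, zero_apply, map_zero]
  refine inv_sub_le_inv_of_le_mul_inv (norm_pos_iff.mpr hG) (norm_pos_iff.mpr hne) htx ?_
  calc ‖(↑u⁻¹ : E →L[𝕜] E) ∘L G‖ ≤ ‖(↑u⁻¹ : E →L[𝕜] E)‖ * ‖G‖ := opNorm_comp_le _ _
    _ ≤ ‖G‖ * (1 - ‖t‖)⁻¹ := by rw [mul_comm]; gcongr; exact norm_oneSub_inv_le t ht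

theorem Submodule.surjOn_of_norm_sub_le (W : Submodule 𝕜 E) [CompleteSpace W] (f : E →L[𝕜] E)
    (hf : Set.MapsTo f W W) {r : ℝ} (hr0 : 0 ≤ r) (hr : r < 1)
    (h : ∀ w ∈ W, ‖f w - w‖ ≤ r * ‖w‖) : Set.SurjOn f W W := by
  set g : W →L[𝕜] W := (f ∘L W.subtypeL).codRestrict W fun w => hf w.2
  have hg : ‖1 - g‖ < 1 := by
    refine (opNorm_le_bound _ hr0 fun w => ?_).trans_lt hr
    show ‖(w : E) - f w‖ ≤ r * ‖(w : E)‖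
    rw [norm_sub_rev]
    exact h w w.2
  set u := Units.oneSub (1 - g) hg
  have hu : (u : W →L[𝕜] W) = g := sub_sub_cancel 1 g
  intro w hw
  refine ⟨↑((↑u⁻¹ : W →L[𝕜] W) ⟨w, hw⟩), Submodule.coe_mem _, ?_⟩
  have := congr($(u.mul_inv) ⟨w, hw⟩)
  rw [hu] at this
  exact congrArg Subtype.val this

end Neumann

section Gap

theorem gapDelta_nonneg {H : Type*} [NormedAddCommGroup H] (M N : Set H) : 0 ≤ gapDelta M N :=
  Real.sSup_nonneg <| by
    rintro _ ⟨x, -, rfl⟩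
    exact Metric.infDist_nonneg

theorem gapHat_nonneg {H : Type*} [NormedAddCommGroup H] (M N : Set H) : 0 ≤ gapHat M N :=
  (gapDelta_nonneg M N).trans (le_max_left _ _)

theorem infDist_le_gapDelta {H : Type*} [NormedAddCommGroup H] {M N : Set H} (hN : (0 : H) ∈ N)
    {u : H} (hu : u ∈ M) (hu1 : ‖u‖ = 1) : Metric.infDist u N ≤ gapDelta M N := by
  refine le_csSup ⟨1, ?_⟩ ⟨u, ⟨hu, hu1⟩, rfl⟩
  rintro _ ⟨x, ⟨-, hx1⟩, rfl⟩
  simpa [hx1] using Metric.infDist_le_dist_of_mem (x := x) hN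

variable {𝕜 H : Type*} [RCLike 𝕜] [NormedAddCommGroup H] [InnerProductSpace 𝕜 H]

namespace Submodule

theorem infDist_eq_norm_sub_starProjection (K : Submodule 𝕜 H) [K.HasOrthogonalProjection]
    (x : H) : Metric.infDist x K = ‖x - K.starProjection x‖ := by
  rw [Metric.infDist_eq_iInf, starProjection_minimal]
  simp only [dist_eq_norm]
  rfl

theorem norm_sub_starProjection_le_gapDelta {M N : Submodule 𝕜 H} [N.HasOrthogonalProjection]
    {m : H} (hm : m ∈ M) : ‖m - N.starProjection m‖ ≤ gapDelta (M : Set H) N * ‖m‖ := by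
  rcases eq_or_ne m 0 with rfl | hm0
  · simp
  have hpos : 0 < ‖m‖ := norm_pos_iff.mpr hm0
  set u := (‖m‖⁻¹ : 𝕜) • m
  have hu1 : ‖u‖ = 1 := by
    rw [norm_smul, norm_inv, RCLike.norm_ofReal, abs_of_pos hpos, inv_mul_cancel₀ hpos.ne']
  have hu := infDist_le_gapDelta N.zero_mem (M.smul_mem _ hm) hu1
  rw [infDist_eq_norm_sub_starProjection] at hu
  have hmu : m - N.starProjection m = (‖m‖ : 𝕜) • (u - N.starProjection u) := by
    rw [map_smul, ← smul_sub, smul_smul, mul_inv_cancel₀ (by exact_mod_cast hpos.ne'), one_smul]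
  rw [hmu, norm_smul, RCLike.norm_ofReal, abs_of_pos hpos, mul_comm]
  gcongr

theorem eq_zero_of_gapDelta_lt_one {M N : Submodule 𝕜 H} [N.HasOrthogonalProjection]
    (h : gapDelta (M : Set H) N < 1) {m : H} (hm : m ∈ M) (hmN : m ∈ Nᗮ) : m = 0 := by
  have := norm_sub_starProjection_le_gapDelta (N := N) hm
  rw [(starProjection_apply_eq_zero_iff N).mpr hmN, sub_zero] at this
  exact norm_eq_zero.mp (by nlinarith [norm_nonneg m])

theorem eq_bot_of_gapDelta_lt_one {M : Submodule 𝕜 H}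
    (h : gapDelta (M : Set H) (⊥ : Submodule 𝕜 H) < 1) : M = ⊥ :=
  (Submodule.eq_bot_iff M).mpr fun _ hm => eq_zero_of_gapDelta_lt_one h hm (by simp)

theorem eq_top_of_gapDelta_lt_one {N : Submodule 𝕜 H} [N.HasOrthogonalProjection]
    (h : gapDelta ((⊤ : Submodule 𝕜 H) : Set H) N < 1) : N = ⊤ := by
  refine Submodule.eq_top_iff'.mpr fun x => ?_
  have := eq_zero_of_gapDelta_lt_one h mem_top (N.sub_starProjection_mem_orthogonal x)
  exact sub_eq_zero.mp this ▸ N.starProjection_apply_mem x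

theorem exists_starProjection_eq_of_gapDelta_lt_one {M N : Submodule 𝕜 H} [CompleteSpace M]
    [CompleteSpace N] (h : gapDelta (N : Set H) M < 1) {n : H} (hn : n ∈ N) :
    ∃ m ∈ M, N.starProjection m = n := by
  have hsurj : Set.SurjOn (N.starProjection ∘L M.starProjection) N N := by
    refine N.surjOn_of_norm_sub_le _ (fun x _ => N.starProjection_apply_mem _)
      (gapDelta_nonneg _ _) h fun w hw => ?_
    calc ‖N.starProjection (M.starProjection w) - w‖
        = ‖N.starProjection (w - M.starProjection w)‖ := by
          rw [map_sub, starProjection_eq_self_iff.mpr hw, norm_sub_rev]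
      _ ≤ ‖w - M.starProjection w‖ := norm_starProjection_apply_le _ _
      _ ≤ gapDelta (N : Set H) M * ‖w‖ := norm_sub_starProjection_le_gapDelta hw
  obtain ⟨x, -, hx⟩ := hsurj hn
  exact ⟨M.starProjection x, M.starProjection_apply_mem x, hx⟩

end Submodule

end Gap

open scoped goldenRatio

section Numerics

theorem sq_add_sq_le_goldenRatio_sq {c ε s t : ℝ} (hc : 1 ≤ c) (hε : 0 ≤ ε)
    (hεc : ε ≤ (φ - 1) * c) (hs : 0 ≤ s) (ht : 0 ≤ t) :
    (t * c + ε + s * (c + ε)) ^ 2 + t ^ 2 ≤ (ε + φ * c * (t + s)) ^ 2 := by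
  have hφ := Real.goldenRatio_sq
  have hφ1 := Real.one_lt_goldenRatio
  have hdiff : (φ - 1) * c * t ≤ (ε + φ * c * (t + s)) - (t * c + ε + s * (c + ε)) := by
    nlinarith [mul_nonneg (sub_nonneg.mpr hεc) hs]
  have hsum : (φ + 1) * c * t ≤ (ε + φ * c * (t + s)) + (t * c + ε + s * (c + ε)) := by
    nlinarith [mul_nonneg (mul_nonneg Real.goldenRatio_pos.le (by linarith : (0 : ℝ) ≤ c)) hs,
      mul_nonneg hs (by linarith : (0 : ℝ) ≤ c + ε)]
  have hprod := mul_le_mul hdiff hsum (by positivity) (hdiff.trans' (by positivity))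
  have hL : (φ - 1) * c * t * ((φ + 1) * c * t) = φ * (c * t) ^ 2 := by
    linear_combination (c * t) ^ 2 * hφ
  have ht2 : t ^ 2 ≤ φ * (c * t) ^ 2 := by
    have hc2 : 1 ≤ φ * c ^ 2 := by nlinarith
    nlinarith [mul_le_mul_of_nonneg_left hc2 (sq_nonneg t)]
  nlinarith [hprod, hL, ht2]

theorem add_mul_add_lt_one_of_max_lt {c ε s t : ℝ} (hc : 1 ≤ c)
    (hε : ε < 1 / (1 + c)) (hst : max t s < 1 / (1 + c) ^ 2) : ε + c * (t + s) < 1 := by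
  have hpos : 0 < 1 + c := by linarith
  have hε' : ε * (1 + c) < 1 := (lt_div_iff₀ hpos).mp hε
  have ht' : t * (1 + c) ^ 2 < 1 :=
    (lt_div_iff₀ (by positivity)).mp ((le_max_left _ _).trans_lt hst)
  have hs' : s * (1 + c) ^ 2 < 1 :=
    (lt_div_iff₀ (by positivity)).mp ((le_max_right _ _).trans_lt hst)
  -- the bound is `(1 + 3c) / (1 + c)²`, which is at most `1` since `c ≥ 1`
  refine lt_of_mul_lt_mul_right ?_ (sq_nonneg (1 + c))
  nlinarith [mul_lt_mul_of_pos_right hε' hpos]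

theorem le_goldenRatio_sub_one_mul {c ε : ℝ} (hc : 1 ≤ c) (hε : ε < 1 / (1 + c)) :
    ε ≤ (φ - 1) * c := by
  have hφ : 3 / 2 ≤ φ := by nlinarith [Real.goldenRatio_sq, Real.one_lt_goldenRatio]
  have : 1 / (1 + c) ≤ 1 / 2 := by gcongr; linarith
  nlinarith

theorem le_div_of_inv_sub_le_inv {g b x : ℝ} (hg : 0 < g) (hx : x < g⁻¹)
    (h : g⁻¹ - x ≤ b⁻¹) : b ≤ g / (1 - g * x) := by
  refine (le_inv_of_le_inv₀ (by linarith) h).trans_eq ?_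
  field_simp

end Numerics

section OuterInverse

variable {X Y : Type*} [NormedAddCommGroup X] [NormedSpace ℂ X] [NormedAddCommGroup Y]
  [NormedSpace ℂ Y] {A : X →L[ℂ] Y} {T T' : Submodule ℂ X} {S S' : Submodule ℂ Y}
  {G : Y →L[ℂ] X}

theorem isOuterInv_zero_iff : IsOuterInv A T S 0 ↔ T = ⊥ ∧ S = ⊤ := by
  simp [IsOuterInv, eq_comm]

theorem IsOuterInv.of_apply (hGAG : ∀ y, G (A (G y)) = G y) (hT : ∀ x, x ∈ T ↔ ∃ y, G y = x)
    (hS : ∀ y, y ∈ S ↔ G y = 0) : IsOuterInv A T S G :=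
  ⟨by ext y; exact hGAG y, by ext x; simp [hT], by ext y; simp [hS]⟩

namespace IsOuterInv

theorem apply_apply_apply (hG : IsOuterInv A T S G) (y : Y) : G (A (G y)) = G y :=
  congr($(hG.1) y)

theorem apply_mem (hG : IsOuterInv A T S G) (y : Y) : G y ∈ T :=
  hG.2.1 ▸ LinearMap.mem_range_self _ y

theorem exists_apply_eq (hG : IsOuterInv A T S G) {x : X} (hx : x ∈ T) : ∃ y, G y = x :=
  LinearMap.mem_range.mp (hG.2.1 ▸ hx)

theorem apply_eq_zero_iff (hG : IsOuterInv A T S G) {y : Y} : G y = 0 ↔ y ∈ S := by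
  rw [← hG.2.2]
  rfl

theorem apply_apply_of_mem (hG : IsOuterInv A T S G) {x : X} (hx : x ∈ T) : G (A x) = x := by
  obtain ⟨y, rfl⟩ := hG.exists_apply_eq hx
  exact hG.apply_apply_apply y

theorem sub_apply_apply_mem (hG : IsOuterInv A T S G) (y : Y) : y - A (G y) ∈ S :=
  hG.apply_eq_zero_iff.mp <| by rw [map_sub, hG.apply_apply_apply, sub_self]

theorem isIdempotentElem_comp (hG : IsOuterInv A T S G) : IsIdempotentElem (A ∘L G) := by
  ext y
  exact congr(A $(hG.apply_apply_apply y))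

theorem isIdempotentElem_comp_left (hG : IsOuterInv A T S G) : IsIdempotentElem (G ∘L A) := by
  ext x
  exact hG.apply_apply_apply (A x)

theorem comp_ne_zero (hG : IsOuterInv A T S G) (hG0 : G ≠ 0) : A ∘L G ≠ 0 := fun h =>
  hG0 <| by rw [← hG.1, h, comp_zero]

theorem comp_left_ne_zero (hG : IsOuterInv A T S G) (hG0 : G ≠ 0) : G ∘L A ≠ 0 := fun h =>
  hG0 <| by rw [← hG.1, ← comp_assoc, h, zero_comp]

theorem one_le_norm_mul_norm (hG : IsOuterInv A T S G) (hG0 : G ≠ 0) : 1 ≤ ‖A‖ * ‖G‖ :=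
  (hG.isIdempotentElem_comp.one_le_norm (hG.comp_ne_zero hG0)).trans (opNorm_comp_le A G)

theorem comp_units_inv (hG : IsOuterInv A T S G) (u : (Y →L[ℂ] Y)ˣ)
    (hu : ∀ y, (u : Y →L[ℂ] Y) (A (G y)) = A (G y))
    (hS : ∀ y, (↑u⁻¹ : Y →L[ℂ] Y) y ∈ S ↔ y ∈ S') :
    IsOuterInv A T S' (G ∘L (↑u⁻¹ : Y →L[ℂ] Y)) := by
  have hinv : ∀ y, (↑u⁻¹ : Y →L[ℂ] Y) ((u : Y →L[ℂ] Y) y) = y := fun y => congr($(u.inv_mul) y)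
  have hu' : ∀ y, (↑u⁻¹ : Y →L[ℂ] Y) (A (G y)) = A (G y) := fun y => by
    conv_lhs => rw [← hu y, hinv]
  refine .of_apply (fun y => ?_) (fun x => ?_) (fun y => ?_)
  · simp only [comp_apply, hu', hG.apply_apply_apply]
  · refine ⟨fun hx => ?_, fun ⟨y, hy⟩ => hy ▸ hG.apply_mem _⟩
    obtain ⟨y, rfl⟩ := hG.exists_apply_eq hx
    exact ⟨(u : Y →L[ℂ] Y) y, by rw [comp_apply, hinv]⟩
  · rw [comp_apply, hG.apply_eq_zero_iff, hS]

theorem units_inv_comp (hG : IsOuterInv A T S G) (u : (X →L[ℂ] X)ˣ)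
    (hu : ∀ x, G (A ((u : X →L[ℂ] X) x)) = G (A x))
    (hT : ∀ x, (u : X →L[ℂ] X) x ∈ T ↔ x ∈ T') :
    IsOuterInv A T' S ((↑u⁻¹ : X →L[ℂ] X) ∘L G) := by
  have hinv : ∀ x, (u : X →L[ℂ] X) ((↑u⁻¹ : X →L[ℂ] X) x) = x := fun x => congr($(u.mul_inv) x)
  have hinv' : ∀ x, (↑u⁻¹ : X →L[ℂ] X) ((u : X →L[ℂ] X) x) = x := fun x => congr($(u.inv_mul) x)
  have hu' : ∀ x, G (A ((↑u⁻¹ : X →L[ℂ] X) x)) = G (A x) := fun x => by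
    conv_rhs => rw [← hinv x, hu]
  refine .of_apply (fun y => ?_) (fun x => ?_) (fun y => ?_)
  · simp only [comp_apply, hu', hG.apply_apply_apply]
  · rw [← hT]
    refine ⟨fun hx => ?_, fun ⟨y, hy⟩ => ?_⟩
    · obtain ⟨y, hy⟩ := hG.exists_apply_eq hx
      exact ⟨y, by rw [comp_apply, hy, hinv']⟩
    · rw [← hy, comp_apply, hinv]
      exact hG.apply_mem y
  · rw [comp_apply, ← hG.apply_eq_zero_iff]
    exact ⟨fun h => by rw [h, map_zero], fun h => by rw [← hinv (G y), h, map_zero]⟩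

theorem exists_add [CompleteSpace Y] (hG : IsOuterInv A T S G) {E : X →L[ℂ] Y}
    (hE : ‖E‖ < ‖G‖⁻¹) : ∃ B, IsOuterInv (A + E) T S B ∧ ‖G‖⁻¹ - ‖E‖ ≤ ‖B‖⁻¹ := by
  have hG0 : G ≠ 0 := ne_zero_of_lt_inv_norm (norm_nonneg E) hE
  have hEG : ‖-(E ∘L G)‖ ≤ ‖G‖ * ‖E‖ := by rw [norm_neg, mul_comm]; exact opNorm_comp_le _ _
  have hg : 0 < ‖G‖ := norm_pos_iff.mpr hG0
  have hEG1 : ‖-(E ∘L G)‖ < 1 :=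
    hEG.trans_lt <| (mul_lt_mul_of_pos_left hE hg).trans_eq (mul_inv_cancel₀ hg.ne')
  -- `N = 1 + E G`
  set N := Units.oneSub (-(E ∘L G)) hEG1
  have hN : ∀ z, (N : Y →L[ℂ] Y) z = z + E (G z) := fun z => by simp [N]
  have hNN : ∀ z, (N : Y →L[ℂ] Y) ((↑N⁻¹ : Y →L[ℂ] Y) z) = z := fun z => congr($(N.mul_inv) z)
  have hNN' : ∀ z, (↑N⁻¹ : Y →L[ℂ] Y) ((N : Y →L[ℂ] Y) z) = z := fun z => congr($(N.inv_mul) z)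
  have hNS : ∀ s ∈ S, (↑N⁻¹ : Y →L[ℂ] Y) s = s := fun s hs => by
    conv_lhs => rw [← add_zero s, ← map_zero E, ← hG.apply_eq_zero_iff.mpr hs, ← hN]
    exact hNN' s
  refine ⟨G ∘L (↑N⁻¹ : Y →L[ℂ] Y), .of_apply (fun y => ?_) (fun x => ?_) (fun y => ?_),
    inv_norm_sub_le_inv_norm_comp_oneSub_inv hG0 hEG1 hEG⟩
  · obtain ⟨z, rfl⟩ : ∃ z, (N : Y →L[ℂ] Y) z = y := ⟨_, hNN y⟩
    have hAE : (A + E) (G z) = (N : Y →L[ℂ] Y) z - (z - A (G z)) := by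
      rw [add_apply, hN]
      abel
    rw [comp_apply, comp_apply, hNN', hAE, map_sub, hNN', hNS _ (hG.sub_apply_apply_mem z),
      sub_sub_cancel, hG.apply_apply_apply]
  · refine ⟨fun hx => ?_, fun ⟨y, hy⟩ => hy ▸ hG.apply_mem _⟩
    obtain ⟨y, rfl⟩ := hG.exists_apply_eq hx
    exact ⟨(N : Y →L[ℂ] Y) y, congrArg G (hNN' y)⟩
  · rw [comp_apply]
    refine ⟨fun hy => by rw [hNS y hy, hG.apply_eq_zero_iff.mpr hy], fun hy => ?_⟩
    rw [← hNN y, hN, hy, map_zero, add_zero]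
    exact hG.apply_eq_zero_iff.mp hy

end IsOuterInv

end OuterInverse

namespace IsOuterInv

section KernelChange

variable {X Y : Type*} [NormedAddCommGroup X] [NormedSpace ℂ X] [NormedAddCommGroup Y]
  [InnerProductSpace ℂ Y] {A : X →L[ℂ] Y} {T : Submodule ℂ X} {S S' : Submodule ℂ Y}
  {G : Y →L[ℂ] X}

theorem norm_one_sub_starProjection_comp_le [S'.HasOrthogonalProjection]
    (hG : IsOuterInv A T S G) (hG0 : G ≠ 0) :
    ‖(1 - S'.starProjection) ∘L (1 - A ∘L G)‖ ≤ ‖G‖ * (gapHat (S : Set Y) S' * ‖A‖) := by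
  refine opNorm_le_bound _ (by positivity [gapHat_nonneg (S : Set Y) S']) fun y => ?_
  set w := y - A (G y)
  have hw : ‖w‖ ≤ ‖A‖ * ‖G‖ * ‖y‖ :=
    (hG.isIdempotentElem_comp.norm_sub_apply_le (hG.comp_ne_zero hG0) y).trans
      (by gcongr; exact opNorm_comp_le A G)
  calc ‖((1 - S'.starProjection) ∘L (1 - A ∘L G)) y‖ = ‖w - S'.starProjection w‖ := rfl
    _ ≤ gapDelta (S : Set Y) S' * ‖w‖ :=
      Submodule.norm_sub_starProjection_le_gapDelta (hG.sub_apply_apply_mem y)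
    _ ≤ gapHat (S : Set Y) S' * (‖A‖ * ‖G‖ * ‖y‖) :=
      mul_le_mul (le_max_left _ _) hw (norm_nonneg _) (gapHat_nonneg _ _)
    _ = ‖G‖ * (gapHat (S : Set Y) S' * ‖A‖) * ‖y‖ := by ring

theorem exists_ker_change [CompleteSpace Y] [CompleteSpace S] [CompleteSpace S']
    (hG : IsOuterInv A T S G) (h : gapHat (S : Set Y) S' * ‖A‖ < ‖G‖⁻¹) :
    ∃ G₁, IsOuterInv A T S' G₁ ∧ ‖G‖⁻¹ - gapHat (S : Set Y) S' * ‖A‖ ≤ ‖G₁‖⁻¹ := by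
  have hδ0 := gapHat_nonneg (S : Set Y) S'
  have hG0 : G ≠ 0 := ne_zero_of_lt_inv_norm (by positivity) h
  have hg : 0 < ‖G‖ := norm_pos_iff.mpr hG0
  have hδc : ‖G‖ * (gapHat (S : Set Y) S' * ‖A‖) < 1 :=
    (mul_lt_mul_of_pos_left h hg).trans_eq (mul_inv_cancel₀ hg.ne')
  have hδ : gapDelta (S' : Set Y) S < 1 :=
    calc gapDelta (S' : Set Y) S ≤ gapHat (S : Set Y) S' * 1 := by
          rw [mul_one]; exact le_max_right _ _
      _ ≤ gapHat (S : Set Y) S' * (‖A‖ * ‖G‖) := by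
          gcongr; exact hG.one_le_norm_mul_norm hG0
      _ = ‖G‖ * (gapHat (S : Set Y) S' * ‖A‖) := by ring
      _ < 1 := hδc
  have ht := hG.norm_one_sub_starProjection_comp_le (S' := S') hG0
  -- `u = 1 - (1 - P_{S'}) (1 - A G)` fixes the range of `A G` and maps `S` onto `S'`
  set u := Units.oneSub _ (ht.trans_lt hδc)
  have hu : ∀ y, (u : Y →L[ℂ] Y) y = S'.starProjection (y - A (G y)) + A (G y) := fun y => by
    simp only [u, Units.val_oneSub, sub_apply, one_apply_eq_self, comp_apply, map_sub]
    abel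
  have huS : ∀ s ∈ S, (u : Y →L[ℂ] Y) s = S'.starProjection s := fun s hs => by
    rw [hu, hG.apply_eq_zero_iff.mpr hs, map_zero, add_zero, sub_zero]
  have hinv : ∀ y, (↑u⁻¹ : Y →L[ℂ] Y) ((u : Y →L[ℂ] Y) y) = y := fun y => congr($(u.inv_mul) y)
  have hinv' : ∀ y, (u : Y →L[ℂ] Y) ((↑u⁻¹ : Y →L[ℂ] Y) y) = y := fun y => congr($(u.mul_inv) y)
  refine ⟨_, hG.comp_units_inv u (fun y => ?_) (fun y => ⟨fun hy => ?_, fun hy => ?_⟩),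
    inv_norm_sub_le_inv_norm_comp_oneSub_inv hG0 _ ht⟩
  · rw [hu, hG.apply_apply_apply, sub_self, map_zero, zero_add]
  · rw [← hinv' y, huS _ hy]
    exact S'.starProjection_apply_mem _
  · obtain ⟨s, hs, rfl⟩ := Submodule.exists_starProjection_eq_of_gapDelta_lt_one hδ hy
    rwa [← huS s hs, hinv]

theorem norm_apply_le_of_mem [S.HasOrthogonalProjection] (hG : IsOuterInv A T S G) {v : Y}
    (hv : v ∈ S') : ‖G v‖ ≤ ‖G‖ * (gapDelta (S' : Set Y) S * ‖v‖) := by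
  have hGv : G v = G (v - S.starProjection v) := by
    rw [map_sub, hG.apply_eq_zero_iff.mpr (S.starProjection_apply_mem v), sub_zero]
  rw [hGv]
  exact (G.le_opNorm _).trans (by gcongr; exact Submodule.norm_sub_starProjection_le_gapDelta hv)

end KernelChange

section RangeChange

variable {X Y : Type*} [NormedAddCommGroup X] [InnerProductSpace ℂ X] [NormedAddCommGroup Y]
  [NormedSpace ℂ Y] {A : X →L[ℂ] Y} {T T' : Submodule ℂ X} {S : Submodule ℂ Y}
  {G : Y →L[ℂ] X}

theorem norm_one_sub_comp_starProjection_le [T.HasOrthogonalProjection]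
    [T'.HasOrthogonalProjection] (hG : IsOuterInv A T S G) (hG0 : G ≠ 0) :
    ‖(1 - G ∘L A) ∘L T'.starProjection‖ ≤ ‖G‖ * (gapHat (T : Set X) T' * ‖A‖) := by
  refine opNorm_le_bound _ (by positivity [gapHat_nonneg (T : Set X) T']) fun x => ?_
  set x' := T'.starProjection x
  -- `1 - G A` kills `P_T x' ∈ T`
  have hw : ((1 - G ∘L A) ∘L T'.starProjection) x
      = (x' - T.starProjection x') - (G ∘L A) (x' - T.starProjection x') := by
    simp only [comp_apply, sub_apply, one_apply_eq_self, map_sub,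
      hG.apply_apply_of_mem (T.starProjection_apply_mem x')]
    abel
  have hx' : ‖x' - T.starProjection x'‖ ≤ gapHat (T : Set X) T' * ‖x‖ :=
    (Submodule.norm_sub_starProjection_le_gapDelta (T'.starProjection_apply_mem x)).trans <|
      mul_le_mul (le_max_right _ _) (T'.norm_starProjection_apply_le x) (norm_nonneg _)
        (gapHat_nonneg _ _)
  rw [hw]
  calc _ ≤ ‖G ∘L A‖ * ‖x' - T.starProjection x'‖ :=
      hG.isIdempotentElem_comp_left.norm_sub_apply_le (hG.comp_left_ne_zero hG0) _
    _ ≤ ‖G‖ * ‖A‖ * (gapHat (T : Set X) T' * ‖x‖) := by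
      gcongr
      exact opNorm_comp_le G A
    _ = ‖G‖ * (gapHat (T : Set X) T' * ‖A‖) * ‖x‖ := by ring

theorem surjOn_comp_starProjection [CompleteSpace T] [T'.HasOrthogonalProjection]
    (hG : IsOuterInv A T S G) (h : ‖G‖ * (gapHat (T : Set X) T' * ‖A‖) < 1) :
    Set.SurjOn (G ∘L A ∘L T'.starProjection) T T := by
  refine T.surjOn_of_norm_sub_le _ (fun x _ => hG.apply_mem _)
    (by positivity [gapHat_nonneg (T : Set X) T']) h fun x hx => ?_
  calc ‖G (A (T'.starProjection x)) - x‖ = ‖G (A (x - T'.starProjection x))‖ := by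
        rw [map_sub, map_sub, hG.apply_apply_of_mem hx, norm_sub_rev]
    _ ≤ ‖G‖ * ‖A‖ * ‖x - T'.starProjection x‖ :=
        (G.le_opNorm _).trans (by rw [mul_assoc]; gcongr; exact A.le_opNorm _)
    _ ≤ ‖G‖ * ‖A‖ * (gapHat (T : Set X) T' * ‖x‖) := by
        gcongr
        exact (Submodule.norm_sub_starProjection_le_gapDelta hx).trans
          (by gcongr; exact le_max_left _ _)
    _ = ‖G‖ * (gapHat (T : Set X) T' * ‖A‖) * ‖x‖ := by ring

theorem exists_range_change [CompleteSpace X] [CompleteSpace T] [CompleteSpace T']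
    (hG : IsOuterInv A T S G) (h : gapHat (T : Set X) T' * ‖A‖ < ‖G‖⁻¹) :
    ∃ G', IsOuterInv A T' S G' ∧ ‖G‖⁻¹ - gapHat (T : Set X) T' * ‖A‖ ≤ ‖G'‖⁻¹ := by
  have hδ0 := gapHat_nonneg (T : Set X) T'
  have hG0 : G ≠ 0 := ne_zero_of_lt_inv_norm (by positivity) h
  have hg : 0 < ‖G‖ := norm_pos_iff.mpr hG0
  have hδc : ‖G‖ * (gapHat (T : Set X) T' * ‖A‖) < 1 :=
    (mul_lt_mul_of_pos_left h hg).trans_eq (mul_inv_cancel₀ hg.ne')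
  have ht := hG.norm_one_sub_comp_starProjection_le (T' := T') hG0
  -- `u = 1 - (1 - G A) P_{T'}` leaves `G A` unchanged and maps `T'` onto `T`
  set u := Units.oneSub _ (ht.trans_lt hδc)
  have hu : ∀ x, (u : X →L[ℂ] X) x = x - T'.starProjection x + G (A (T'.starProjection x)) :=
    fun x => by
      simp only [u, Units.val_oneSub, sub_apply, one_apply_eq_self, comp_apply]
      abel
  have huT' : ∀ x ∈ T', (u : X →L[ℂ] X) x = G (A x) := fun x hx => by
    rw [hu, Submodule.starProjection_eq_self_iff.mpr hx, sub_self, zero_add]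
  have hinv : ∀ x, (↑u⁻¹ : X →L[ℂ] X) ((u : X →L[ℂ] X) x) = x := fun x => congr($(u.inv_mul) x)
  have hsurj := hG.surjOn_comp_starProjection (T' := T') hδc
  refine ⟨_, hG.units_inv_comp u (fun x => ?_) (fun x => ⟨fun hx => ?_, fun hx => ?_⟩),
    inv_norm_sub_le_inv_norm_oneSub_inv_comp hG0 _ ht⟩
  · rw [hu, map_add, map_add, map_sub, map_sub, hG.apply_apply_apply, sub_add_cancel]
  · obtain ⟨v, -, hv⟩ := hsurj hx
    rw [comp_apply, comp_apply, ← huT' _ (T'.starProjection_apply_mem v)] at hv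
    rw [← hinv x, ← hv, hinv]
    exact T'.starProjection_apply_mem v
  · rw [huT' x hx]
    exact hG.apply_mem _

end RangeChange

theorem zero_of_gapDelta_lt_one {X Y : Type*} [NormedAddCommGroup X] [InnerProductSpace ℂ X]
    [NormedAddCommGroup Y] [InnerProductSpace ℂ Y] {A A' : X →L[ℂ] Y} {T T' : Submodule ℂ X}
    {S S' : Submodule ℂ Y} [S'.HasOrthogonalProjection] (hG : IsOuterInv A T S 0)
    (hT : gapDelta (T' : Set X) T < 1) (hS : gapDelta (S : Set Y) S' < 1) :
    IsOuterInv A' T' S' 0 := by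
  obtain ⟨rfl, rfl⟩ := isOuterInv_zero_iff.mp hG
  exact isOuterInv_zero_iff.mpr
    ⟨Submodule.eq_bot_of_gapDelta_lt_one hT, Submodule.eq_top_of_gapDelta_lt_one hS⟩

section Estimate

variable {X Y : Type*} [NormedAddCommGroup X] [InnerProductSpace ℂ X] [NormedAddCommGroup Y]
  [InnerProductSpace ℂ Y] {A E : X →L[ℂ] Y} {T T' : Submodule ℂ X} {S S' : Submodule ℂ Y}
  {G B : Y →L[ℂ] X}

theorem norm_starProjection_sub_le [T.HasOrthogonalProjection] [S.HasOrthogonalProjection]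
    (hG : IsOuterInv A T S G) (hB : IsOuterInv (A + E) T' S' B) (hB0 : B ≠ 0) (y : Y) :
    ‖T.starProjection (B y - G y)‖ ≤ (gapHat (T : Set X) T' * (‖A‖ * ‖G‖) + ‖G‖ * ‖E‖ +
      gapHat (S : Set Y) S' * (‖A‖ * ‖G‖ + ‖G‖ * ‖E‖)) * (‖B‖ * ‖y‖) := by
  set b := B y
  set v := y - (A + E) b
  have hb : ‖b‖ ≤ ‖B‖ * ‖y‖ := B.le_opNorm y
  have hid : T.starProjection (b - G y) = G (A (T.starProjection b - b)) - G (E b) - G v := by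
    simp only [v, map_sub, add_apply, map_add, Submodule.starProjection_eq_self_iff.mpr
      (hG.apply_mem y), hG.apply_apply_of_mem (T.starProjection_apply_mem b)]
    abel
  have h1 : ‖G (A (T.starProjection b - b))‖ ≤
      gapHat (T : Set X) T' * (‖A‖ * ‖G‖) * (‖B‖ * ‖y‖) := by
    calc _ ≤ ‖G‖ * (‖A‖ * ‖b - T.starProjection b‖) := by
          rw [norm_sub_rev]; exact (G.le_opNorm _).trans (by gcongr; exact A.le_opNorm _)
      _ ≤ ‖G‖ * (‖A‖ * (gapHat (T : Set X) T' * (‖B‖ * ‖y‖))) := by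
          gcongr
          exact (Submodule.norm_sub_starProjection_le_gapDelta (hB.apply_mem y)).trans
            (mul_le_mul (le_max_right _ _) hb (norm_nonneg _) (gapHat_nonneg _ _))
      _ = _ := by ring
  have h2 : ‖G (E b)‖ ≤ ‖G‖ * ‖E‖ * (‖B‖ * ‖y‖) :=
    (G.le_opNorm _).trans <| by rw [mul_assoc]; gcongr; exact (E.le_opNorm b).trans (by gcongr)
  have h3 : ‖G v‖ ≤ gapHat (S : Set Y) S' * (‖A‖ * ‖G‖ + ‖G‖ * ‖E‖) * (‖B‖ * ‖y‖) := by
    have hv : ‖v‖ ≤ (‖A‖ + ‖E‖) * (‖B‖ * ‖y‖) := calc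
      ‖v‖ ≤ ‖(A + E) ∘L B‖ * ‖y‖ :=
        hB.isIdempotentElem_comp.norm_sub_apply_le (hB.comp_ne_zero hB0) y
      _ ≤ (‖A‖ + ‖E‖) * ‖B‖ * ‖y‖ := by
        gcongr; exact (opNorm_comp_le _ _).trans (by gcongr; exact norm_add_le A E)
      _ = _ := by ring
    calc ‖G v‖ ≤ ‖G‖ * (gapDelta (S' : Set Y) S * ‖v‖) :=
          hG.norm_apply_le_of_mem (hB.sub_apply_apply_mem y)
      _ ≤ ‖G‖ * (gapHat (S : Set Y) S' * ((‖A‖ + ‖E‖) * (‖B‖ * ‖y‖))) := by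
          gcongr
          · exact gapHat_nonneg _ _
          · exact le_max_right _ _
      _ = _ := by ring
  rw [hid]
  calc _ ≤ ‖G (A (T.starProjection b - b))‖ + ‖G (E b)‖ + ‖G v‖ :=
        (norm_sub_le _ _).trans (by gcongr; exact norm_sub_le _ _)
    _ ≤ _ := by linarith

theorem norm_sub_le_mul_norm [T.HasOrthogonalProjection] [S.HasOrthogonalProjection]
    (hG : IsOuterInv A T S G) (hB : IsOuterInv (A + E) T' S' B) (hG0 : G ≠ 0) (hB0 : B ≠ 0)
    (hE : ‖G‖ * ‖E‖ ≤ (φ - 1) * (‖A‖ * ‖G‖)) :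
    ‖B - G‖ ≤ (‖G‖ * ‖E‖ + φ * (‖A‖ * ‖G‖) * (gapHat (T : Set X) T' + gapHat (S : Set Y) S'))
      * ‖B‖ := by
  have hdT := gapHat_nonneg (T : Set X) T'
  have hdS := gapHat_nonneg (S : Set Y) S'
  have hgold := sq_add_sq_le_goldenRatio_sq (hG.one_le_norm_mul_norm hG0) (by positivity) hE
    hdS hdT
  refine opNorm_le_bound _ (by positivity) fun y => ?_
  rw [sub_apply, mul_assoc]
  set z := B y - G y
  -- orthogonal decomposition along `T`: the `Tᗮ`-part of `z` is that of `B y ∈ T'`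
  have hperp : ‖z - T.starProjection z‖ ≤ gapHat (T : Set X) T' * (‖B‖ * ‖y‖) := by
    have hz : z - T.starProjection z = B y - T.starProjection (B y) := by
      simp only [z, map_sub, Submodule.starProjection_eq_self_iff.mpr (hG.apply_mem y)]
      abel
    rw [hz]
    exact (Submodule.norm_sub_starProjection_le_gapDelta (hB.apply_mem y)).trans
      (mul_le_mul (le_max_right _ _) (B.le_opNorm y) (norm_nonneg _) hdT)
  have hpar := hG.norm_starProjection_sub_le hB hB0 y
  have hpyth : ‖z‖ ^ 2 = ‖T.starProjection z‖ ^ 2 + ‖z - T.starProjection z‖ ^ 2 := by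
    simpa using Submodule.norm_sq_eq_add_norm_sq_starProjection z T
  refine (pow_le_pow_iff_left₀ (norm_nonneg _) (by positivity) two_ne_zero).mp ?_
  rw [hpyth]
  calc _ ≤ ((gapHat (T : Set X) T' * (‖A‖ * ‖G‖) + ‖G‖ * ‖E‖ +
          gapHat (S : Set Y) S' * (‖A‖ * ‖G‖ + ‖G‖ * ‖E‖)) * (‖B‖ * ‖y‖)) ^ 2 +
          (gapHat (T : Set X) T' * (‖B‖ * ‖y‖)) ^ 2 := by
        gcongr
    _ ≤ _ := by
        rw [mul_pow _ (‖B‖ * ‖y‖), mul_pow _ (‖B‖ * ‖y‖), mul_pow _ (‖B‖ * ‖y‖), ← add_mul]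
        exact mul_le_mul_of_nonneg_right hgold (by positivity)

end Estimate

end IsOuterInv

variable {X Y : Type*} [NormedAddCommGroup X] [InnerProductSpace ℂ X] [CompleteSpace X]
  [NormedAddCommGroup Y] [InnerProductSpace ℂ Y] [CompleteSpace Y]
theorem stmt_17 (A E : X →L[ℂ] Y) (T T' : Submodule ℂ X) (S S' : Submodule ℂ Y)
    (hT : IsClosed (T : Set X)) (hT' : IsClosed (T' : Set X))
    (hS : IsClosed (S : Set Y)) (hS' : IsClosed (S' : Set Y))
    (G : Y →L[ℂ] X) (hG : IsOuterInv A T S G)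
    (hgap : max (gapHat (T : Set X) (T' : Set X)) (gapHat (S : Set Y) (S' : Set Y)) <
      1 / (1 + ‖A‖ * ‖G‖) ^ 2)
    (hE : ‖G‖ * ‖E‖ < 1 / (1 + ‖G‖ * ‖A‖)) :
    ∃ Gbar : Y →L[ℂ] X, IsOuterInv (A + E) T' S' Gbar ∧
      ‖Gbar - G‖ ≤ ‖G‖ ^ 2 * (‖E‖ + (1 + Real.sqrt 5) / 2 * ‖A‖ *
          (gapHat (T : Set X) (T' : Set X) + gapHat (S : Set Y) (S' : Set Y))) /
        (1 - ‖G‖ * (‖E‖ + ‖A‖ * (gapHat (T : Set X) (T' : Set X) +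
          gapHat (S : Set Y) (S' : Set Y)))) := by
  have := hT.completeSpace_coe
  have := hT'.completeSpace_coe
  have := hS.completeSpace_coe
  have := hS'.completeSpace_coe
  obtain rfl | hG0 := eq_or_ne G 0
  · simp only [norm_zero, mul_zero, add_zero, one_pow, div_one] at hgap
    refine ⟨0, hG.zero_of_gapDelta_lt_one ?_ ?_, by simp⟩
    · exact (le_max_right _ _).trans_lt ((le_max_left _ _).trans_lt hgap)
    · exact (le_max_left _ _).trans_lt ((le_max_right _ _).trans_lt hgap)
  set D := gapHat (T : Set X) T' + gapHat (S : Set Y) S'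
  have hD0 : 0 ≤ D := add_nonneg (gapHat_nonneg _ _) (gapHat_nonneg _ _)
  have hg : 0 < ‖G‖ := norm_pos_iff.mpr hG0
  have hc := hG.one_le_norm_mul_norm hG0
  rw [mul_comm ‖G‖ ‖A‖] at hE
  have hD : ‖E‖ + ‖A‖ * D < ‖G‖⁻¹ := by
    refine ((lt_inv_mul_iff₀ hg).mpr ?_).trans_eq (mul_one _)
    linarith [add_mul_add_lt_one_of_max_lt hc hE hgap]
  have hdT := mul_nonneg (gapHat_nonneg (T : Set X) T') (norm_nonneg A)
  have hdS := mul_nonneg (gapHat_nonneg (S : Set Y) S') (norm_nonneg A)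
  obtain ⟨G₁, hG₁, hG₁inv⟩ := hG.exists_ker_change (S' := S') (by linarith [norm_nonneg E])
  obtain ⟨G₂, hG₂, hG₂inv⟩ := hG₁.exists_range_change (T' := T') (by linarith [norm_nonneg E])
  obtain ⟨B, hB, hBinv₂⟩ := hG₂.exists_add (E := E) (by linarith)
  have hBinv : ‖G‖⁻¹ - (‖E‖ + ‖A‖ * D) ≤ ‖B‖⁻¹ := by linarith
  have hB0 : B ≠ 0 := ne_zero_of_lt_inv_norm le_rfl (by linarith)
  have hBnorm := le_div_of_inv_sub_le_inv hg hD hBinv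
  refine ⟨B, hB, ?_⟩
  calc ‖B - G‖ ≤ (‖G‖ * ‖E‖ + φ * (‖A‖ * ‖G‖) * D) * ‖B‖ :=
        hG.norm_sub_le_mul_norm hB hG0 hB0 (le_goldenRatio_sub_one_mul hc hE)
    _ ≤ (‖G‖ * ‖E‖ + φ * (‖A‖ * ‖G‖) * D) * (‖G‖ / (1 - ‖G‖ * (‖E‖ + ‖A‖ * D))) := by
        gcongr
    _ = _ := by ring
end
end

section
/- Let X, Y be Hilbert spaces, A ∈ B(X,Y) with closed range, and δA ∈ B(X,Y) with ‖A⁺‖·‖δA‖ < 1; put Ā = A + δA. If R(Ā) ∩ R(A)^⊥ = {0} (stable perturbation), then R(Ā) is closed and B := A⁺(I + δA·A⁺)^{-1} = (I + A⁺·δA)^{-1}A⁺ satisfies ĀBĀ = Ā and BĀB = B, and ‖B‖ ≤ ‖A⁺‖/(1 − ‖A⁺‖·‖δA‖). -/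
/-!
Put `B = A⁺ (I + δA A⁺)⁻¹` and `Ā = A + δA`. The push-through identity
`A⁺ (I + δA A⁺) = (I + A⁺ δA) A⁺` gives the second form of `B`, and together with `A⁺ A A⁺ = A⁺`
it turns `B Ā B` into `(I + A⁺ δA)⁻¹ (I + A⁺ δA) A⁺ (I + δA A⁺)⁻¹ = B`.
For `Ā B Ā = Ā`, let `z = (I + δA A⁺)⁻¹ Ā x`. Then `Ā (x - A⁺ z) = z - A A⁺ z` lies in `R(Ā)`, and
also in `R(A)^⊥` because `A A⁺` is the orthogonal projection onto `R(A)`; stability makes it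
vanish, and then `Ā A⁺ z = (I + δA A⁺) z = Ā x`. Since `Ā B` fixes exactly `R(Ā)`, that range is
closed, and the norm bound is the Neumann series for `(I + δA A⁺)⁻¹`.
-/

noncomputable section

open ContinuousLinearMap

variable {X Y : Type*} [NormedAddCommGroup X] [InnerProductSpace ℂ X] [CompleteSpace X]
  [NormedAddCommGroup Y] [InnerProductSpace ℂ Y] [CompleteSpace Y]

theorem isClosed_range_of_comp_comp_eq_self {α β : Type*} [TopologicalSpace β] [T2Space β]
    {f : α → β} {g : β → α} (hfg : Continuous (f ∘ g)) (h : ∀ x, f (g (f x)) = f x) :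
    IsClosed (Set.range f) := by
  have hrange : Set.range f = {y | f (g y) = y} :=
    Set.ext fun y => ⟨by rintro ⟨x, rfl⟩; exact h x, fun hy => ⟨g y, hy⟩⟩
  rw [hrange]
  exact isClosed_eq hfg continuous_id

section NormedRing

variable {R : Type*} [NormedRing R] [HasSummableGeomSeries R]

theorem isUnit_one_add_of_norm_lt_one {x : R} (hx : ‖x‖ < 1) : IsUnit (1 + x) := by
  simpa using isUnit_one_sub_of_norm_lt_one (x := -x) (by rwa [norm_neg])

theorem norm_inverse_one_add_le (h1 : ‖(1 : R)‖ ≤ 1) {x : R} (hx : ‖x‖ < 1) :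
    ‖Ring.inverse (1 + x)‖ ≤ (1 - ‖x‖)⁻¹ := by
  have hx' : ‖-x‖ < 1 := by rwa [norm_neg]
  calc ‖Ring.inverse (1 + x)‖ = ‖∑' n : ℕ, (-x) ^ n‖ := by
        rw [geom_series_eq_inverse _ hx', sub_neg_eq_add]
    _ ≤ ‖(1 : R)‖ - 1 + (1 - ‖-x‖)⁻¹ := tsum_geometric_le_of_norm_lt_one _ hx'
    _ ≤ (1 - ‖x‖)⁻¹ := by rw [norm_neg]; linarith

end NormedRing

namespace ContinuousLinearMap

variable {R : Type*} [Ring R] {E F : Type*}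
  [TopologicalSpace E] [AddCommGroup E] [Module R E]
  [TopologicalSpace F] [AddCommGroup F] [Module R F] [IsTopologicalAddGroup F]

theorem comp_inverse_one_add_comp [IsTopologicalAddGroup E] (a : F →L[R] E) (b : E →L[R] F)
    (hab : IsUnit (1 + a ∘L b)) (hba : IsUnit (1 + b ∘L a)) :
    a ∘L Ring.inverse (1 + b ∘L a) = Ring.inverse (1 + a ∘L b) ∘L a := by
  have hcomm : (1 + a ∘L b) ∘L a = a ∘L (1 + b ∘L a) := by
    ext y; simp
  calc a ∘L Ring.inverse (1 + b ∘L a)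
      = (Ring.inverse (1 + a ∘L b) ∘L (1 + a ∘L b)) ∘L a ∘L Ring.inverse (1 + b ∘L a) := by
        rw [← mul_def, Ring.inverse_mul_cancel _ hab]; rfl
    _ = Ring.inverse (1 + a ∘L b) ∘L a ∘L ((1 + b ∘L a) ∘L Ring.inverse (1 + b ∘L a)) := by
        rw [← comp_assoc a, ← hcomm]; simp only [comp_assoc]
    _ = Ring.inverse (1 + a ∘L b) ∘L a := by
        rw [← mul_def (1 + b ∘L a), Ring.mul_inverse_cancel _ hba]; rfl

variable {A dA : E →L[R] F} {Ap : F →L[R] E}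

theorem add_comp_comp_add_eq_self (K : Submodule R F) (hK : ∀ z, z - A (Ap z) ∈ K)
    (hstable : LinearMap.range ((A + dA : E →L[R] F) : E →ₗ[R] F) ⊓ K = ⊥)
    (hu : IsUnit (1 + dA ∘L Ap)) :
    (A + dA) ∘L ((Ap ∘L Ring.inverse (1 + dA ∘L Ap)) ∘L (A + dA)) = A + dA := by
  ext x
  set z := Ring.inverse (1 + dA ∘L Ap) ((A + dA) x)
  have hz : z + dA (Ap z) = (A + dA) x := by
    simpa [z] using congr($(Ring.mul_inverse_cancel _ hu) ((A + dA) x))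
  have hmem : z - A (Ap z) ∈ LinearMap.range ((A + dA : E →L[R] F) : E →ₗ[R] F) ⊓ K := by
    refine ⟨⟨x - Ap z, ?_⟩, hK z⟩
    rw [coe_coe, map_sub, ← hz, add_apply]
    abel
  rw [hstable, Submodule.mem_bot, sub_eq_zero] at hmem
  calc (A + dA) (Ap z) = z + dA (Ap z) := by rw [add_apply, ← hmem]
    _ = (A + dA) x := hz

theorem comp_add_comp_eq_self [IsTopologicalAddGroup E] (h : Ap ∘L (A ∘L Ap) = Ap)
    (hu : IsUnit (1 + dA ∘L Ap)) (hv : IsUnit (1 + Ap ∘L dA)) :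
    (Ap ∘L Ring.inverse (1 + dA ∘L Ap)) ∘L ((A + dA) ∘L (Ap ∘L Ring.inverse (1 + dA ∘L Ap))) =
      Ap ∘L Ring.inverse (1 + dA ∘L Ap) := by
  have hsandwich : Ap ∘L (A + dA) ∘L Ap = (1 + Ap ∘L dA) ∘L Ap := by
    simp only [add_comp, comp_add, h, comp_assoc]
    rfl
  calc (Ap ∘L Ring.inverse (1 + dA ∘L Ap)) ∘L ((A + dA) ∘L (Ap ∘L Ring.inverse (1 + dA ∘L Ap)))
      = Ring.inverse (1 + Ap ∘L dA) ∘L (Ap ∘L (A + dA) ∘L Ap) ∘L Ring.inverse (1 + dA ∘L Ap) := by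
        nth_rw 1 [comp_inverse_one_add_comp Ap dA hv hu]; simp only [comp_assoc]
    _ = (Ring.inverse (1 + Ap ∘L dA) ∘L (1 + Ap ∘L dA)) ∘L Ap ∘L Ring.inverse (1 + dA ∘L Ap) := by
        rw [hsandwich]; simp only [comp_assoc]
    _ = Ap ∘L Ring.inverse (1 + dA ∘L Ap) := by
        rw [← mul_def, Ring.inverse_mul_cancel _ hv]; rfl

end ContinuousLinearMap

theorem ContinuousLinearMap.sub_apply_mem_orthogonal_range {𝕜 E F : Type*} [RCLike 𝕜]
    [NormedAddCommGroup E] [InnerProductSpace 𝕜 E] [CompleteSpace E]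
    [NormedAddCommGroup F] [InnerProductSpace 𝕜 F] [CompleteSpace F]
    {A : E →L[𝕜] F} {Ap : F →L[𝕜] E} (h : A ∘L (Ap ∘L A) = A)
    (hadj : adjoint (A ∘L Ap) = A ∘L Ap) (z : F) :
    z - A (Ap z) ∈ (LinearMap.range (A : E →ₗ[𝕜] F))ᗮ := by
  rw [Submodule.mem_orthogonal]
  rintro _ ⟨x, rfl⟩
  have hproj : inner 𝕜 (A x) (A (Ap z)) = inner 𝕜 (A x) z := by
    rw [← comp_apply A Ap, ← adjoint_inner_left, hadj, ← comp_apply (A ∘L Ap) A, comp_assoc, h]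
  rw [coe_coe, inner_sub_right, hproj, sub_self]

theorem stmt_18_general (A dA : X →L[ℂ] Y)
    (Ap : Y →L[ℂ] X) (hAp : IsMPInv A Ap)
    (hsmall : ‖Ap‖ * ‖dA‖ < 1)
    (hstable : LinearMap.range ((A + dA : X →L[ℂ] Y) : X →ₗ[ℂ] Y) ⊓ (LinearMap.range (A : X →ₗ[ℂ] Y))ᗮ = ⊥) :
    IsClosed ((LinearMap.range ((A + dA : X →L[ℂ] Y) : X →ₗ[ℂ] Y) : Submodule ℂ Y) : Set Y) ∧
    Ap ∘L Ring.inverse (1 + dA ∘L Ap) = Ring.inverse (1 + Ap ∘L dA) ∘L Ap ∧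
    (A + dA) ∘L ((Ap ∘L Ring.inverse (1 + dA ∘L Ap)) ∘L (A + dA)) = A + dA ∧
    (Ap ∘L Ring.inverse (1 + dA ∘L Ap)) ∘L
        ((A + dA) ∘L (Ap ∘L Ring.inverse (1 + dA ∘L Ap))) =
      Ap ∘L Ring.inverse (1 + dA ∘L Ap) ∧
    ‖Ap ∘L Ring.inverse (1 + dA ∘L Ap)‖ ≤ ‖Ap‖ / (1 - ‖Ap‖ * ‖dA‖) := by
  obtain ⟨hAApA, hApAAp, hAAp_adj, -⟩ := hAp
  have hs : ‖dA ∘L Ap‖ ≤ ‖Ap‖ * ‖dA‖ := (opNorm_comp_le dA Ap).trans_eq (mul_comm _ _)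
  have hu := isUnit_one_add_of_norm_lt_one (hs.trans_lt hsmall)
  have hv := isUnit_one_add_of_norm_lt_one ((opNorm_comp_le Ap dA).trans_lt hsmall)
  have hinnerInv := add_comp_comp_add_eq_self _ (sub_apply_mem_orthogonal_range hAApA hAAp_adj)
    hstable hu
  refine ⟨?_, comp_inverse_one_add_comp Ap dA hv hu, hinnerInv,
    comp_add_comp_eq_self hApAAp hu hv, ?_⟩
  · rw [LinearMap.coe_range, coe_coe]
    exact isClosed_range_of_comp_comp_eq_self (g := Ap ∘L Ring.inverse (1 + dA ∘L Ap))
      (by fun_prop) fun x => congr($hinnerInv x)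
  · have hinv : ‖Ring.inverse (1 + dA ∘L Ap)‖ ≤ (1 - ‖Ap‖ * ‖dA‖)⁻¹ :=
      (norm_inverse_one_add_le norm_id_le (hs.trans_lt hsmall)).trans
        (inv_anti₀ (by linarith) (by linarith))
    calc ‖Ap ∘L Ring.inverse (1 + dA ∘L Ap)‖ ≤ ‖Ap‖ * ‖Ring.inverse (1 + dA ∘L Ap)‖ :=
          opNorm_comp_le _ _
      _ ≤ ‖Ap‖ / (1 - ‖Ap‖ * ‖dA‖) := by
          rw [div_eq_mul_inv]; gcongr

theorem stmt_18 (A dA : X →L[ℂ] Y) (hR : IsClosed ((LinearMap.range (A : X →ₗ[ℂ] Y) : Submodule ℂ Y) : Set Y))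
    (Ap : Y →L[ℂ] X) (hAp : IsMPInv A Ap)
    (hsmall : ‖Ap‖ * ‖dA‖ < 1)
    (hstable : LinearMap.range ((A + dA : X →L[ℂ] Y) : X →ₗ[ℂ] Y) ⊓ (LinearMap.range (A : X →ₗ[ℂ] Y))ᗮ = ⊥) :
    IsClosed ((LinearMap.range ((A + dA : X →L[ℂ] Y) : X →ₗ[ℂ] Y) : Submodule ℂ Y) : Set Y) ∧
    Ap ∘L Ring.inverse (1 + dA ∘L Ap) = Ring.inverse (1 + Ap ∘L dA) ∘L Ap ∧
    (A + dA) ∘L ((Ap ∘L Ring.inverse (1 + dA ∘L Ap)) ∘L (A + dA)) = A + dA ∧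
    (Ap ∘L Ring.inverse (1 + dA ∘L Ap)) ∘L
        ((A + dA) ∘L (Ap ∘L Ring.inverse (1 + dA ∘L Ap))) =
      Ap ∘L Ring.inverse (1 + dA ∘L Ap) ∧
    ‖Ap ∘L Ring.inverse (1 + dA ∘L Ap)‖ ≤ ‖Ap‖ / (1 - ‖Ap‖ * ‖dA‖) :=
  stmt_18_general A dA Ap hAp hsmall hstable
end
end
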